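/- Let ψ:[t₀,∞)→(0,∞) be non-increasing with tψ(t)<1 for all large t, and let Ψ(t)=tψ(t)/(1−tψ(t)). Let x∈[0,1) be irrational with partial quotients a_n(x) and convergent denominators q_n(x). If a_{n+1}(x)·a_n(x) ≤ Ψ(q_n(x))/4 for all sufficiently large n, then x is ψ-Dirichlet improvable, i.e. x∈D(ψ). -/

import Mathlib

open Filter MeasureTheory Set

/-- The set `D(ψ)` of `ψ`-Dirichlet improvable numbers: those `x ∈ ℝ` such that for all
sufficiently large `t` the system `|qx - p| < ψ t`, `|q| < t` has a nontrivial integer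
solution `(p, q)`. -/
def DirichletSet (ψ : ℝ → ℝ) : Set ℝ :=
  {x | ∃ N : ℝ, ∀ t : ℝ, t > N →
    ∃ p q : ℤ, (p, q) ≠ (0, 0) ∧ |(q : ℝ) * x - p| < ψ t ∧ |(q : ℝ)| < t}

/-- The Gauss map `T(x) = 1/x mod 1`, with `T(0) = 0`. -/
noncomputable def gaussMap (x : ℝ) : ℝ := if x = 0 then 0 else Int.fract (1 / x)

/-- `cfA x n` is the `n`-th partial quotient `a_n(x)` of the continued fraction
expansion of `x ∈ [0,1)`, for `n ≥ 1`: `a_n(x) = ⌊1 / T^{n-1}(x)⌋`. -/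
noncomputable def cfA (x : ℝ) (n : ℕ) : ℕ := ⌊1 / (gaussMap^[n - 1] x)⌋₊

/-- `cfQ x n` is the denominator `q_n(x)` of the `n`-th convergent of `x`:
`q₀ = 1`, `q₁ = a₁`, `q_{n+2} = a_{n+2} q_{n+1} + q_n`. -/
noncomputable def cfQ (x : ℝ) : ℕ → ℕ
  | 0 => 1
  | 1 => cfA x 1
  | (n + 2) => cfA x (n + 2) * cfQ x (n + 1) + cfQ x n

/-!
For `q_n < t ≤ q_{n+1}` the convergent `p_n / q_n` does the job. Its error is exactly
`|q_n x - p_n| = 1 / (q_{n+1} + q_n T^{n+1} x)`, and since `q_{n+1} ≤ (a_{n+1} + 1) q_n` and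
`1 < T^{n+1} x · (a_{n+2} + 1)`, we get `q_{n+1} < 4 a_{n+1} a_{n+2} · q_n T^{n+1} x
≤ Ψ(q_{n+1}) · q_n T^{n+1} x` by the hypothesis at `n + 1`. Unwinding `Ψ`, this says precisely
that the error is below `ψ(q_{n+1}) ≤ ψ(t)`.
-/

noncomputable def cfP (x : ℝ) : ℕ → ℕ
  | 0 => 0
  | 1 => 1
  | (n + 2) => cfA x (n + 2) * cfP x (n + 1) + cfP x n

lemma Nat.exists_ge_lt_and_le_succ {α : Type*} [LinearOrder α] {f : ℕ → α} {K : ℕ} {t : α}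
    (hK : f K < t) (h : ∃ m ≥ K, t ≤ f m) : ∃ n ≥ K, f n < t ∧ t ≤ f (n + 1) := by
  classical
  obtain ⟨hmK, hm⟩ := Nat.find_spec h
  have hne : Nat.find h ≠ K := fun he ↦ (he ▸ hm).not_gt hK
  obtain ⟨n, hn⟩ := Nat.exists_eq_add_one_of_ne_zero (by omega : Nat.find h ≠ 0)
  have hmin := Nat.find_min h (by omega : n < Nat.find h)
  simp only [ge_iff_le, not_and, not_le] at hmin
  exact ⟨n, by omega, hmin (by omega), hn ▸ hm⟩

lemma one_div_eq_floor_add_gaussMap {y : ℝ} (hy : 0 < y) : 1 / y = ⌊1 / y⌋₊ + gaussMap y := by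
  rw [gaussMap, if_neg hy.ne', natCast_floor_eq_intCast_floor (by positivity), Int.floor_add_fract]

lemma one_lt_mul_floor_one_div_add_one {y : ℝ} (hy : 0 < y) : 1 < y * (⌊1 / y⌋₊ + 1) := by
  have := Nat.lt_floor_add_one (1 / y)
  rwa [div_lt_iff₀' hy] at this

lemma Irrational.gaussMap {y : ℝ} (hy : Irrational y) :
    Irrational (gaussMap y) ∧ gaussMap y ∈ Ioo 0 1 := by
  have hfract : Irrational (Int.fract (1 / y)) := by
    rw [← Int.self_sub_floor, one_div]; exact hy.inv.sub_intCast _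
  rw [_root_.gaussMap, if_neg hy.ne_zero]
  exact ⟨hfract, (Int.fract_nonneg _).lt_of_ne' hfract.ne_zero, Int.fract_lt_one _⟩

lemma one_div_add_lt_of_lt_mul {Q s c : ℝ} (hQ : 0 < Q) (hs : 0 ≤ s) (hc : Q * c < 1)
    (h : Q < Q * c / (1 - Q * c) * s) : 1 / (Q + s) < c := by
  rw [div_mul_eq_mul_div, lt_div_iff₀ (by linarith)] at h
  rw [div_lt_iff₀ (by positivity)]
  nlinarith

section ContinuedFraction

variable {x : ℝ}

lemma gaussMap_iterate_mem (hirr : Irrational x) (hx : x ∈ Ioo 0 1) (n : ℕ) :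
    Irrational (gaussMap^[n] x) ∧ gaussMap^[n] x ∈ Ioo 0 1 := by
  induction n with
  | zero => exact ⟨hirr, hx⟩
  | succ n ih => rw [Function.iterate_succ_apply']; exact ih.1.gaussMap

lemma gaussMap_iterate_pos (hirr : Irrational x) (hx : x ∈ Ioo 0 1) (n : ℕ) :
    0 < gaussMap^[n] x :=
  (gaussMap_iterate_mem hirr hx n).2.1

lemma cfA_succ_def (x : ℝ) (n : ℕ) : cfA x (n + 1) = ⌊1 / gaussMap^[n] x⌋₊ := rfl

lemma one_le_cfA_succ (hirr : Irrational x) (hx : x ∈ Ioo 0 1) (n : ℕ) : 1 ≤ cfA x (n + 1) := by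
  obtain ⟨hpos, hlt⟩ := (gaussMap_iterate_mem hirr hx n).2
  rw [cfA_succ_def, Nat.one_le_floor_iff]
  exact (one_lt_one_div hpos hlt).le

lemma one_div_gaussMap_iterate (hirr : Irrational x) (hx : x ∈ Ioo 0 1) (n : ℕ) :
    1 / gaussMap^[n] x = cfA x (n + 1) + gaussMap^[n + 1] x := by
  rw [cfA_succ_def, Function.iterate_succ_apply']
  exact one_div_eq_floor_add_gaussMap (gaussMap_iterate_pos hirr hx n)

lemma cfQ_monotone (hirr : Irrational x) (hx : x ∈ Ioo 0 1) : Monotone (cfQ x) := by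
  refine monotone_nat_of_le_succ fun n ↦ ?_
  cases n with
  | zero => exact one_le_cfA_succ hirr hx 0
  | succ n =>
    rw [cfQ]
    nlinarith [one_le_cfA_succ hirr hx (n + 1)]

lemma cfQ_pos (hirr : Irrational x) (hx : x ∈ Ioo 0 1) (n : ℕ) : 0 < cfQ x n :=
  cfQ_monotone hirr hx (Nat.zero_le n)

lemma le_cfQ (hirr : Irrational x) (hx : x ∈ Ioo 0 1) : ∀ n, n ≤ cfQ x n
  | 0 => Nat.zero_le _
  | 1 => one_le_cfA_succ hirr hx 0
  | n + 2 => by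
    have := le_cfQ hirr hx (n + 1)
    rw [cfQ]
    nlinarith [one_le_cfA_succ hirr hx (n + 1), cfQ_pos hirr hx n]

lemma tendsto_cfQ_atTop (hirr : Irrational x) (hx : x ∈ Ioo 0 1) :
    Tendsto (fun n ↦ (cfQ x n : ℝ)) atTop atTop :=
  tendsto_natCast_atTop_atTop.comp <| tendsto_atTop_mono (le_cfQ hirr hx) tendsto_id

lemma cfQ_succ_le (hirr : Irrational x) (hx : x ∈ Ioo 0 1) (n : ℕ) :
    cfQ x (n + 1) ≤ (cfA x (n + 1) + 1) * cfQ x n := by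
  cases n with
  | zero => simp [cfQ]
  | succ n =>
    rw [cfQ]
    nlinarith [cfQ_monotone hirr hx (Nat.le_succ n)]

lemma cfP_succ_mul_cfQ_sub (x : ℝ) (n : ℕ) :
    (cfP x (n + 1) * cfQ x n : ℤ) - cfP x n * cfQ x (n + 1) = (-1) ^ n := by
  induction n with
  | zero => simp [cfP, cfQ]
  | succ n ih =>
    simp only [cfP, cfQ, Nat.cast_add, Nat.cast_mul]
    linear_combination (-1 : ℤ) * ih

lemma mul_cfQ_add_eq (hirr : Irrational x) (hx : x ∈ Ioo 0 1) (n : ℕ) :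
    x * (cfQ x (n + 1) + cfQ x n * gaussMap^[n + 1] x)
      = cfP x (n + 1) + cfP x n * gaussMap^[n + 1] x := by
  induction n with
  | zero =>
    have h := one_div_gaussMap_iterate hirr hx 0
    rw [Function.iterate_zero_apply, div_eq_iff hx.1.ne'] at h
    simp only [cfP, cfQ, zero_add, Nat.cast_one, Nat.cast_zero]
    linear_combination -h
  | succ n ih =>
    have h := one_div_gaussMap_iterate hirr hx (n + 1)
    rw [div_eq_iff (gaussMap_iterate_pos hirr hx (n + 1)).ne'] at h
    simp only [cfP, cfQ, Nat.cast_add, Nat.cast_mul]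
    linear_combination (cfA x (n + 2) + gaussMap^[n + 2] x) * ih
      + (x * cfQ x n - cfP x n) * h

lemma abs_cfQ_mul_sub_cfP (hirr : Irrational x) (hx : x ∈ Ioo 0 1) (n : ℕ) :
    |(cfQ x n : ℝ) * x - cfP x n| = 1 / (cfQ x (n + 1) + cfQ x n * gaussMap^[n + 1] x) := by
  have hdet : (cfP x (n + 1) * cfQ x n : ℝ) - cfP x n * cfQ x (n + 1) = (-1) ^ n := by
    exact_mod_cast cfP_succ_mul_cfQ_sub x n
  have hprod : ((cfQ x n : ℝ) * x - cfP x n) * (cfQ x (n + 1) + cfQ x n * gaussMap^[n + 1] x)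
      = (-1) ^ n := by
    linear_combination (cfQ x n : ℝ) * mul_cfQ_add_eq hirr hx n + hdet
  have hpos : (0 : ℝ) < cfQ x (n + 1) + cfQ x n * gaussMap^[n + 1] x := by
    have := cfQ_pos hirr hx (n + 1)
    have := gaussMap_iterate_pos hirr hx (n + 1)
    positivity
  rw [eq_div_iff hpos.ne', ← abs_of_pos hpos, ← abs_mul, hprod, abs_neg_one_pow]

lemma cfQ_succ_lt (hirr : Irrational x) (hx : x ∈ Ioo 0 1) (n : ℕ) :
    (cfQ x (n + 1) : ℝ)
      < (cfA x (n + 1) + 1) * (cfA x (n + 2) + 1) * (cfQ x n * gaussMap^[n + 1] x) := by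
  have hq : (cfQ x (n + 1) : ℝ) ≤ (cfA x (n + 1) + 1) * cfQ x n := by
    exact_mod_cast cfQ_succ_le hirr hx n
  have hy : 1 < gaussMap^[n + 1] x * (cfA x (n + 2) + 1) :=
    one_lt_mul_floor_one_div_add_one (gaussMap_iterate_pos hirr hx (n + 1))
  have hpos : (0 : ℝ) < (cfA x (n + 1) + 1) * cfQ x n := by
    have := cfQ_pos hirr hx n
    positivity
  calc (cfQ x (n + 1) : ℝ) ≤ (cfA x (n + 1) + 1) * cfQ x n := hq
    _ < (cfA x (n + 1) + 1) * cfQ x n * (gaussMap^[n + 1] x * (cfA x (n + 2) + 1)) :=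
      lt_mul_of_one_lt_right hpos hy
    _ = _ := by ring

lemma abs_cfQ_mul_sub_cfP_lt (hirr : Irrational x) (hx : x ∈ Ioo 0 1) {n : ℕ} {c : ℝ}
    (hc : cfQ x (n + 1) * c < 1)
    (h : (cfA x (n + 2) : ℝ) * cfA x (n + 1) ≤ cfQ x (n + 1) * c / (1 - cfQ x (n + 1) * c) / 4) :
    |(cfQ x n : ℝ) * x - cfP x n| < c := by
  have ha : (1 : ℝ) ≤ cfA x (n + 1) := by exact_mod_cast one_le_cfA_succ hirr hx n
  have hb : (1 : ℝ) ≤ cfA x (n + 2) := by exact_mod_cast one_le_cfA_succ hirr hx (n + 1)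
  have hs : 0 ≤ (cfQ x n : ℝ) * gaussMap^[n + 1] x :=
    mul_nonneg (Nat.cast_nonneg _) (gaussMap_iterate_pos hirr hx (n + 1)).le
  rw [abs_cfQ_mul_sub_cfP hirr hx]
  refine one_div_add_lt_of_lt_mul (Nat.cast_pos.2 (cfQ_pos hirr hx (n + 1))) hs hc ?_
  calc (cfQ x (n + 1) : ℝ)
      < (cfA x (n + 1) + 1) * (cfA x (n + 2) + 1) * (cfQ x n * gaussMap^[n + 1] x) :=
        cfQ_succ_lt hirr hx n
    _ ≤ 4 * (cfA x (n + 2) * cfA x (n + 1)) * (cfQ x n * gaussMap^[n + 1] x) := by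
        exact mul_le_mul_of_nonneg_right (by nlinarith) hs
    _ ≤ _ := by gcongr; linarith

end ContinuedFraction

theorem mem_dirichletSet_of_prod_partial_quotients_le_general
    (t₀ : ℝ) (ψ : ℝ → ℝ)
    (hψanti : AntitoneOn ψ (Ici t₀))
    (hψ1 : ∃ T : ℝ, ∀ t ≥ T, t * ψ t < 1)
    (Ψ : ℝ → ℝ) (hΨ : ∀ t, Ψ t = t * ψ t / (1 - t * ψ t))
    (x : ℝ) (hx : x ∈ Ico (0 : ℝ) 1) (hirr : Irrational x)
    (h : ∃ N : ℕ, ∀ n ≥ N, 0 < n →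
      (cfA x (n + 1) : ℝ) * cfA x n ≤ Ψ (cfQ x n) / 4) :
    x ∈ DirichletSet ψ := by
  have hx' : x ∈ Ioo 0 1 := ⟨hx.1.lt_of_ne' hirr.ne_zero, hx.2⟩
  obtain ⟨N, hN⟩ := h
  obtain ⟨T, hT⟩ := hψ1
  refine ⟨max (max t₀ T) (cfQ x N), fun t ht ↦ ?_⟩
  simp only [gt_iff_lt, max_lt_iff] at ht
  obtain ⟨⟨ht₀, hTt⟩, hNt⟩ := ht
  obtain ⟨n, hnN, hnt, htn⟩ := Nat.exists_ge_lt_and_le_succ (f := fun n ↦ (cfQ x n : ℝ)) hNt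
    ((eventually_ge_atTop N).and ((tendsto_cfQ_atTop hirr hx').eventually_ge_atTop t)).exists
  have happrox : |(cfQ x n : ℝ) * x - cfP x n| < ψ (cfQ x (n + 1)) :=
    abs_cfQ_mul_sub_cfP_lt hirr hx' (hT _ (hTt.trans_le htn).le)
      (hΨ _ ▸ hN (n + 1) (by omega) n.succ_pos)
  refine ⟨cfP x n, cfQ x n, ?_, ?_, ?_⟩
  · simp [(cfQ_pos hirr hx' n).ne']
  · push_cast
    exact happrox.trans_le (hψanti ht₀.le (ht₀.le.trans htn) htn)
  · simpa using hnt

/-- **Sufficient condition for Dirichlet improvability.** If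
`a_{n+1}(x) a_n(x) ≤ Ψ(q_n(x)) / 4` for all sufficiently large `n`, then `x ∈ D(ψ)`. -/
theorem mem_dirichletSet_of_prod_partial_quotients_le
    (t₀ : ℝ) (ht₀ : 1 ≤ t₀) (ψ : ℝ → ℝ)
    (hψpos : ∀ t ∈ Ici t₀, 0 < ψ t) (hψanti : AntitoneOn ψ (Ici t₀))
    (hψ1 : ∃ T : ℝ, ∀ t ≥ T, t * ψ t < 1)
    (Ψ : ℝ → ℝ) (hΨ : ∀ t, Ψ t = t * ψ t / (1 - t * ψ t))
    (x : ℝ) (hx : x ∈ Ico (0 : ℝ) 1) (hirr : Irrational x)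
    (h : ∃ N : ℕ, ∀ n ≥ N, 0 < n →
      (cfA x (n + 1) : ℝ) * cfA x n ≤ Ψ (cfQ x n) / 4) :
    x ∈ DirichletSet ψ :=
  mem_dirichletSet_of_prod_partial_quotients_le_general t₀ ψ hψanti hψ1 Ψ hΨ x hx hirr h
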